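/- arXiv:2202.12380 — 3 statements merged into one kernel-verified Lean document; each statement's English description precedes it below -/
import Mathlib

section
/- Assume in addition that x ≠ 0 and let 0 < E < 1. Then for every natural number k with k > log(E)/log(1 − q), the residual of the approximate coefficient-domain matching pursuit with resets satisfies ‖r_k‖₂² < E·‖x‖₂²; in particular, the algorithm with stopping condition ‖r_k‖₂² ≤ E·‖x‖₂² terminates after finitely many selection steps, achieving the desired approximation error. -/
open scoped BigOperators
open ComplexConjugate

/-- The inner product `⟨u,v⟩ = ∑ l, u l * conj (v l)`. -/
noncomputable def cip {L : ℕ} (u v : Fin L → ℂ) : ℂ := ∑ l, u l * conj (v l)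

/-- The Euclidean norm `‖u‖₂ = √(∑ l, |u l|²)`. -/
noncomputable def nrm {L : ℕ} (u : Fin L → ℂ) : ℝ := Real.sqrt (∑ l, ‖u l‖ ^ 2)

/-!
Between two resets the coefficient estimates drift from the true correlations `⟨r_k, d_i⟩` by
at most `ε` times the accumulated step sizes `Σ_k`, because each update uses the thresholded Gram
matrix, whose entries are off by at most `ε`. So whenever the first reset criterion does not fire,
the estimates are accurate up to `δ` times the selected coefficient `ĉ`. One matching pursuit step
with such estimates removes at least `(1 - 2δ)|ĉ|²` of residual energy, and the definition of
`λ_min` gives `|ĉ|² ≥ λ_min ‖r‖² / (1 + δ)²`; hence `‖r_{k+1}‖² ≤ (1 - q) ‖r_k‖²`. That `λ_min > 0`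
follows from compactness of the unit sphere and the spanning assumption.
-/

open scoped InnerProductSpace

theorem exists_norm_eq_one (𝕜 : Type*) {E : Type*} [RCLike 𝕜] [NormedAddCommGroup E]
    [NormedSpace 𝕜 E] [Nontrivial E] : ∃ y : E, ‖y‖ = 1 :=
  have ⟨_, hy⟩ := exists_ne (0 : E)
  ⟨_, norm_smul_inv_norm (𝕜 := 𝕜) hy⟩

section InnerProductSpace

variable {𝕜 E ι : Type*} [RCLike 𝕜] [NormedAddCommGroup E] [InnerProductSpace 𝕜 E]

open RCLike in
theorem norm_sub_smul_sq_le {v r : E} (hv : ‖v‖ = 1) {c : 𝕜} {δ : ℝ}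
    (hc : ‖⟪v, r⟫_𝕜 - c‖ ≤ δ * ‖c‖) :
    ‖r - c • v‖ ^ 2 ≤ ‖r‖ ^ 2 - (1 - 2 * δ) * ‖c‖ ^ 2 := by
  have hsplit : ⟪r, c • v⟫_𝕜 = (‖c‖ ^ 2 : ℝ) + c * conj (⟪v, r⟫_𝕜 - c) := by
    rw [inner_smul_right, ← inner_conj_symm, map_sub, mul_sub, mul_conj]
    push_cast
    ring
  have herr : -(δ * ‖c‖ ^ 2) ≤ re (c * conj (⟪v, r⟫_𝕜 - c)) := by
    refine neg_le_of_abs_le ((abs_re_le_norm _).trans ?_)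
    rw [norm_mul, norm_conj, sq]
    nlinarith [norm_nonneg c]
  rw [@norm_sub_sq 𝕜, norm_smul, hv, mul_one, hsplit, map_add, ofReal_re]
  linarith

variable (𝕜) in
noncomputable def lambdaMin (d : ι → E) : ℝ := ⨅ y : {y : E // ‖y‖ = 1}, ⨆ i, ‖⟪d i, y⟫_𝕜‖ ^ 2

variable {d : ι → E}

theorem bddBelow_range_iSup_norm_inner_sq :
    BddBelow (Set.range fun y : {y : E // ‖y‖ = 1} => ⨆ i, ‖⟪d i, y⟫_𝕜‖ ^ 2) :=
  ⟨0, by rintro _ ⟨y, rfl⟩; exact Real.iSup_nonneg fun i => sq_nonneg _⟩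

theorem lambdaMin_mul_norm_sq_le (y : E) : lambdaMin 𝕜 d * ‖y‖ ^ 2 ≤ ⨆ i, ‖⟪d i, y⟫_𝕜‖ ^ 2 := by
  rcases eq_or_ne y 0 with rfl | hy
  · simp
  have hu := ciInf_le (bddBelow_range_iSup_norm_inner_sq (𝕜 := 𝕜) (d := d))
    ⟨(‖y‖ : 𝕜)⁻¹ • y, norm_smul_inv_norm hy⟩
  simp only [inner_smul_right, norm_mul, norm_inv, RCLike.norm_ofReal, abs_norm, mul_pow] at hu
  rw [← Real.mul_iSup_of_nonneg (by positivity)] at hu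
  calc lambdaMin 𝕜 d * ‖y‖ ^ 2 ≤ ‖y‖⁻¹ ^ 2 * (⨆ i, ‖⟪d i, y⟫_𝕜‖ ^ 2) * ‖y‖ ^ 2 := by
        gcongr; exact hu
    _ = ⨆ i, ‖⟪d i, y⟫_𝕜‖ ^ 2 := by field_simp

theorem lambdaMin_le_one [Nontrivial E] (hd : ∀ i, ‖d i‖ ≤ 1) : lambdaMin 𝕜 d ≤ 1 := by
  obtain ⟨y, hy⟩ := exists_norm_eq_one 𝕜 (E := E)
  refine (ciInf_le bddBelow_range_iSup_norm_inner_sq ⟨y, hy⟩).trans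
    (Real.iSup_le (fun i => ?_) zero_le_one)
  have := norm_inner_le_norm (𝕜 := 𝕜) (d i) y
  rw [hy, mul_one] at this
  nlinarith [norm_nonneg ⟪d i, y⟫_𝕜, hd i]

theorem lambdaMin_pos [Finite ι] [Nontrivial E] [FiniteDimensional 𝕜 E]
    (hd : Submodule.span 𝕜 (Set.range d) = ⊤) : 0 < lambdaMin 𝕜 d := by
  have := FiniteDimensional.proper_rclike 𝕜 E
  obtain ⟨y₁, hy₁⟩ := exists_norm_eq_one 𝕜 (E := E)
  have hbdd (y : E) : BddAbove (Set.range fun i => ‖⟪d i, y⟫_𝕜‖ ^ 2) :=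
    (Set.finite_range _).bddAbove
  have hlsc : LowerSemicontinuous fun y : E => ⨆ i, ‖⟪d i, y⟫_𝕜‖ ^ 2 :=
    lowerSemicontinuous_ciSup hbdd fun i =>
      (by fun_prop : Continuous fun y : E => ‖⟪d i, y⟫_𝕜‖ ^ 2).lowerSemicontinuous
  obtain ⟨y₀, hy₀, hmin⟩ := (hlsc.lowerSemicontinuousOn _).exists_isMinOn
    ⟨y₁, by simpa using hy₁⟩ (isCompact_sphere 0 1)
  obtain ⟨i, hi⟩ : ∃ i, ⟪d i, y₀⟫_𝕜 ≠ 0 := by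
    by_contra! h
    have : innerₛₗ 𝕜 y₀ = 0 := LinearMap.ext_on_range hd fun i => by
      rw [coe_innerₛₗ_apply, LinearMap.zero_apply]
      exact inner_eq_zero_symm.mp (h i)
    exact ne_zero_of_mem_unit_sphere ⟨y₀, hy₀⟩ (inner_self_eq_zero.mp congr($this y₀))
  have : Nonempty {y : E // ‖y‖ = 1} := ⟨⟨y₁, hy₁⟩⟩
  refine (pow_pos (norm_pos_iff.mpr hi) 2).trans_le
    ((le_ciSup (hbdd y₀) i).trans (le_ciInf fun y => hmin ?_))
  simpa using y.2

theorem norm_sub_smul_sq_le_of_approx_greedy (hd : ∀ i, ‖d i‖ = 1) {r : E}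
    {c : ι → 𝕜} {j : ι} {δ ϵ : ℝ} (hδ : 0 ≤ δ) (hϵ : 0 ≤ ϵ) (hϵδ : ϵ ≤ 1 - 2 * δ)
    (hj : ∀ i, ‖c i‖ ≤ ‖c j‖) (hc : ∀ i, ‖⟪d i, r⟫_𝕜 - c i‖ ≤ δ * ‖c j‖) :
    ‖r - c j • d j‖ ^ 2 ≤ (1 - ϵ / (1 + δ) ^ 2 * lambdaMin 𝕜 d) * ‖r‖ ^ 2 := by
  have hdescent := norm_sub_smul_sq_le (hd j) (hc j)
  have hcorr (i : ι) : ‖⟪d i, r⟫_𝕜‖ ^ 2 ≤ ((1 + δ) * ‖c j‖) ^ 2 := by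
    refine pow_le_pow_left₀ (norm_nonneg _) ?_ 2
    linarith [norm_le_norm_add_norm_sub' ⟪d i, r⟫_𝕜 (c i), hc i, hj i]
  have hlam : lambdaMin 𝕜 d * ‖r‖ ^ 2 ≤ ((1 + δ) * ‖c j‖) ^ 2 :=
    (lambdaMin_mul_norm_sq_le r).trans (Real.iSup_le hcorr (sq_nonneg _))
  have hgain : ϵ / (1 + δ) ^ 2 * lambdaMin 𝕜 d * ‖r‖ ^ 2 ≤ (1 - 2 * δ) * ‖c j‖ ^ 2 :=
    calc ϵ / (1 + δ) ^ 2 * lambdaMin 𝕜 d * ‖r‖ ^ 2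
        = ϵ / (1 + δ) ^ 2 * (lambdaMin 𝕜 d * ‖r‖ ^ 2) := by ring
      _ ≤ ϵ / (1 + δ) ^ 2 * ((1 + δ) * ‖c j‖) ^ 2 := by gcongr
      _ = ϵ * ‖c j‖ ^ 2 := by field_simp
      _ ≤ (1 - 2 * δ) * ‖c j‖ ^ 2 := by gcongr
  linarith

/-- `ρ k` is the residual `r_k`; `cpre k` and `chat k` are the estimates `ĉ_k` of the correlations
`⟨ρ k, d i⟩` before and after the reset test, `kout k` is the last reset time `k°_k` and `S k` is
`Σ_k`. The second alternative of `reset_or_keep` records that the first reset criterion failed. -/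
structure IsApproxCDMPRun (d : ι → E) (ε δ : ℝ) (Gε : ι → ι → 𝕜) (ρ : ℕ → E)
    (cpre chat : ℕ → ι → 𝕜) (p : ℕ → ι) (koutpre kout : ℕ → ℕ) (S : ℕ → ℝ) : Prop where
  norm_inner_sub_gram_le : ∀ i j, ‖⟪d i, d j⟫_𝕜 - Gε i j‖ ≤ ε
  sum_eq : ∀ k, S k = ∑ l ∈ Finset.Icc (koutpre k + 1) k, ‖chat (l - 1) (p l)‖
  cpre_zero : ∀ i, cpre 0 i = ⟪d i, ρ 0⟫_𝕜
  koutpre_zero : koutpre 0 = 0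
  reset_or_keep : ∀ k, (chat k = (fun i => ⟪d i, ρ k⟫_𝕜) ∧ kout k = k) ∨
    (chat k = cpre k ∧ kout k = koutpre k ∧ ε / δ * S k ≤ ‖chat k (p (k + 1))‖)
  greedy : ∀ k i, ‖chat k i‖ ≤ ‖chat k (p (k + 1))‖
  residual_succ : ∀ k, ρ (k + 1) = ρ k - chat k (p (k + 1)) • d (p (k + 1))
  cpre_succ : ∀ k, cpre (k + 1) = fun i => chat k i - chat k (p (k + 1)) * Gε i (p (k + 1))
  koutpre_succ : ∀ k, koutpre (k + 1) = kout k

namespace IsApproxCDMPRun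

variable {ε δ : ℝ} {Gε : ι → ι → 𝕜} {ρ : ℕ → E} {cpre chat : ℕ → ι → 𝕜}
  {p : ℕ → ι} {koutpre kout : ℕ → ℕ} {S : ℕ → ℝ}

theorem kout_eq_self_or_eq_koutpre (h : IsApproxCDMPRun d ε δ Gε ρ cpre chat p koutpre kout S)
    (k : ℕ) : kout k = k ∨ kout k = koutpre k :=
  (h.reset_or_keep k).imp (·.2) (·.2.1)

theorem koutpre_le (h : IsApproxCDMPRun d ε δ Gε ρ cpre chat p koutpre kout S)
    (k : ℕ) : koutpre k ≤ k := by
  induction k with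
  | zero => exact h.koutpre_zero.le
  | succ k ih => rw [h.koutpre_succ]; rcases h.kout_eq_self_or_eq_koutpre k with h' | h' <;> omega

theorem kout_le (h : IsApproxCDMPRun d ε δ Gε ρ cpre chat p koutpre kout S)
    (k : ℕ) : kout k ≤ k := by
  rcases h.kout_eq_self_or_eq_koutpre k with h' | h' <;> linarith [h.koutpre_le k]

theorem norm_cpre_sub_inner_le (h : IsApproxCDMPRun d ε δ Gε ρ cpre chat p koutpre kout S)
    (k : ℕ) (i : ι) : ‖cpre k i - ⟪d i, ρ k⟫_𝕜‖ ≤ ε * S k := by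
  induction k generalizing i with
  | zero => simp [h.cpre_zero, h.sum_eq, h.koutpre_zero]
  | succ k ih =>
    set S' := ∑ l ∈ Finset.Icc (kout k + 1) k, ‖chat (l - 1) (p l)‖
    have hS_succ : S (k + 1) = S' + ‖chat k (p (k + 1))‖ := by
      rw [h.sum_eq, h.koutpre_succ, Finset.sum_Icc_succ_top (by linarith [h.kout_le k])]
      rfl
    have hchat (i : ι) : ‖chat k i - ⟪d i, ρ k⟫_𝕜‖ ≤ ε * S' := by
      rcases h.reset_or_keep k with ⟨hc, hk⟩ | ⟨hc, hk, -⟩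
      · simp [S', hc, hk]
      · rw [hc, show S' = S k by rw [h.sum_eq, ← hk]]
        exact ih i
    calc ‖cpre (k + 1) i - ⟪d i, ρ (k + 1)⟫_𝕜‖
        = ‖(chat k i - ⟪d i, ρ k⟫_𝕜) +
            chat k (p (k + 1)) * (⟪d i, d (p (k + 1))⟫_𝕜 - Gε i (p (k + 1)))‖ := by
          rw [h.cpre_succ, h.residual_succ, inner_sub_right, inner_smul_right]
          ring_nf
      _ ≤ ε * S' + ‖chat k (p (k + 1))‖ * ε :=
          norm_add_le_of_le (hchat i)
            ((norm_mul _ _).trans_le (by gcongr; exact h.norm_inner_sub_gram_le i _))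
      _ = ε * S (k + 1) := by rw [hS_succ]; ring

theorem norm_inner_sub_chat_le (h : IsApproxCDMPRun d ε δ Gε ρ cpre chat p koutpre kout S)
    (hδ : 0 < δ) (k : ℕ) (i : ι) :
    ‖⟪d i, ρ k⟫_𝕜 - chat k i‖ ≤ δ * ‖chat k (p (k + 1))‖ := by
  rcases h.reset_or_keep k with ⟨hc, -⟩ | ⟨hc, -, hguard⟩
  · simp only [hc, sub_self, norm_zero]
    positivity
  rw [norm_sub_rev]
  calc ‖chat k i - ⟪d i, ρ k⟫_𝕜‖ ≤ ε * S k := hc ▸ h.norm_cpre_sub_inner_le k i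
    _ = δ * (ε / δ * S k) := by field_simp
    _ ≤ δ * ‖chat k (p (k + 1))‖ := by gcongr

theorem norm_sq_residual_succ_le (h : IsApproxCDMPRun d ε δ Gε ρ cpre chat p koutpre kout S)
    (hd : ∀ i, ‖d i‖ = 1) (hδ : 0 < δ) {ϵ : ℝ} (hϵ : 0 ≤ ϵ)
    (hϵδ : ϵ ≤ 1 - 2 * δ) (k : ℕ) :
    ‖ρ (k + 1)‖ ^ 2 ≤ (1 - ϵ / (1 + δ) ^ 2 * lambdaMin 𝕜 d) * ‖ρ k‖ ^ 2 := by
  rw [h.residual_succ]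
  exact norm_sub_smul_sq_le_of_approx_greedy hd hδ.le hϵ hϵδ (h.greedy k)
    (h.norm_inner_sub_chat_le hδ k)

end IsApproxCDMPRun

end InnerProductSpace

theorem norm_sub_ite_lt_le {α : Type*} [NormedAddCommGroup α] {ε : ℝ} (hε : 0 ≤ ε) (z : α) :
    ‖z - if ε < ‖z‖ then z else 0‖ ≤ ε := by
  split_ifs with h
  · simpa using hε
  · simpa using not_lt.mp h

theorem Matrix.mulVec_add_single {m n R : Type*} [Fintype n] [DecidableEq n] [CommSemiring R]
    (M : Matrix m n R) (v : n → R) (j : n) (a : R) :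
    M.mulVec (v + Pi.single j a) = M.mulVec v + a • M.col j := by
  ext
  simp [Matrix.mulVec_add]

theorem lt_mul_of_le_mul_succ_of_log_div_log_lt {u : ℕ → ℝ} {a E : ℝ} (ha0 : 0 < a) (ha1 : a < 1)
    (hE : 0 < E) (hu0 : 0 < u 0) (hu : ∀ k, u (k + 1) ≤ a * u k) {n : ℕ}
    (hn : Real.log E / Real.log a < n) : u n < E * u 0 := by
  have hpow : a ^ n < E := by
    rw [Real.pow_lt_iff_lt_log ha0 hE]
    linarith [(div_lt_iff_of_neg (Real.log_neg ha0 ha1)).mp hn]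
  calc u n ≤ a ^ n * u 0 := le_geom ha0.le n fun k _ => hu k
    _ < E * u 0 := by gcongr

theorem nrm_eq_norm {L : ℕ} (u : Fin L → ℂ) : nrm u = ‖WithLp.toLp 2 u‖ := by
  simp [nrm, EuclideanSpace.norm_eq]

theorem cip_eq_inner {L : ℕ} (u v : Fin L → ℂ) :
    cip u v = ⟪WithLp.toLp 2 v, WithLp.toLp 2 u⟫_ℂ := by
  simp [cip, PiLp.inner_apply]

theorem iInf_iSup_cip_eq_lambdaMin {L P : ℕ} (D : Matrix (Fin L) (Fin P) ℂ) :
    ⨅ y : {y : Fin L → ℂ // nrm y = 1}, ⨆ i : Fin P, ‖cip (y : Fin L → ℂ) (fun l => D l i)‖ ^ 2 =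
      lambdaMin ℂ fun i => WithLp.toLp 2 fun l => D l i :=
  Equiv.iInf_congr
    ((WithLp.equiv 2 (Fin L → ℂ)).symm.subtypeEquiv fun y => by rw [nrm_eq_norm]; rfl)
    fun y => by simp only [cip_eq_inner]; rfl

theorem span_range_toLp_eq_top {L P : ℕ} {D : Matrix (Fin L) (Fin P) ℂ}
    (hspan : Submodule.span ℂ (Set.range fun i => (fun l => D l i)) = ⊤) :
    Submodule.span ℂ (Set.range fun i => WithLp.toLp 2 fun l => D l i) = ⊤ := by
  have := Submodule.span_image (WithLp.linearEquiv 2 ℂ (Fin L → ℂ)).symm.toLinearMap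
    (s := Set.range fun i => (fun l => D l i))
  rwa [hspan, Submodule.map_top, LinearEquiv.range, ← Set.range_comp] at this

/-- `cpre k`, `ppre (k+1)`, `koutpre k` are the quantities `ĉ_k`, `p_{k+1}`, `k°_k` before the
reset test, `R k` is the reset criterion evaluated on them, and `chat k`, `p (k+1)`, `kout k` are
the ones used in the update. -/
theorem approx_cdmp_with_resets_terminates_general
    {L P : ℕ}
    (x : Fin L → ℂ) (hx : x ≠ 0) (D : Matrix (Fin L) (Fin P) ℂ)
    (hDnorm : ∀ i, nrm (fun l => D l i) = 1)
    (hspan : Submodule.span ℂ (Set.range fun i => (fun l => D l i)) = ⊤)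
    (lammin : ℝ)
    (hlam : lammin = ⨅ y : {y : Fin L → ℂ // nrm y = 1},
      ⨆ i : Fin P, ‖cip (y : Fin L → ℂ) (fun l => D l i)‖ ^ 2)
    (ε δ ϵ' q : ℝ)
    (hε0 : 0 < ε)
    (hδ0 : 0 < δ)
    (hϵ'0 : 0 < ϵ') (hϵ' : ϵ' < 1 - 2 * δ)
    (hq : q = ϵ' / (1 + δ) ^ 2 * lammin)
    (G Gε : Matrix (Fin P) (Fin P) ℂ)
    (hG : ∀ i j, G i j = cip (fun l => D l j) (fun l => D l i))
    (hGε : ∀ i j, Gε i j = if ε < ‖G i j‖ then G i j else 0)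
    (c cpre chat : ℕ → Fin P → ℂ) (ppre p : ℕ → Fin P) (koutpre kout : ℕ → ℕ)
    (r : ℕ → Fin L → ℂ) (hr : ∀ k, r k = x - D.mulVec (c k))
    (S : ℕ → ℝ)
    (hS : ∀ k, S k = ∑ l ∈ Finset.Icc (koutpre k + 1) k, ‖chat (l - 1) (p l)‖)
    (R : ℕ → Prop)
    (hR : ∀ k, R k ↔
      (‖cpre k (ppre (k + 1))‖ < ε / δ * S k ∨
        ‖cpre k (ppre (k + 1))‖ <
          2 * δ * (1 - q) ^ (((koutpre k : ℝ) - (k : ℝ)) / 2) / (1 - (2 * δ + ϵ')) *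
            nrm (r (koutpre k))))
    (hc0 : c 0 = 0)
    (hcpre0 : ∀ i, cpre 0 i = cip x (fun l => D l i))
    (hkoutpre0 : koutpre 0 = 0)
    (hresetT : ∀ k, R k → (chat k = fun i => cip (r k) (fun l => D l i)) ∧ kout k = k)
    (hresetF : ∀ k, ¬ R k → chat k = cpre k ∧ p (k + 1) = ppre (k + 1) ∧ kout k = koutpre k)
    (hp : ∀ k i, ‖chat k i‖ ≤ ‖chat k (p (k + 1))‖)
    (hcrec : ∀ k, c (k + 1) = c k + Pi.single (p (k + 1)) (chat k (p (k + 1))))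
    (hcprerec : ∀ k, cpre (k + 1) = fun i => chat k i - chat k (p (k + 1)) * Gε i (p (k + 1)))
    (hkoutrec : ∀ k, koutpre (k + 1) = kout k)
    (E : ℝ) (hE0 : 0 < E) :
    ∀ k : ℕ, Real.log E / Real.log (1 - q) < (k : ℝ) →
      nrm (r k) ^ 2 < E * nrm x ^ 2 := by
  intro k hk
  set d : Fin P → EuclideanSpace ℂ (Fin L) := fun i => WithLp.toLp 2 fun l => D l i
  set ρ : ℕ → EuclideanSpace ℂ (Fin L) := fun k => WithLp.toLp 2 (r k)
  have hcip (u : Fin L → ℂ) (i : Fin P) : cip u (fun l => D l i) = ⟪d i, WithLp.toLp 2 u⟫_ℂ :=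
    cip_eq_inner u _
  have hρ0 : ρ 0 = WithLp.toLp 2 x := by simp [ρ, hr, hc0]
  have hrun : IsApproxCDMPRun d ε δ Gε ρ cpre chat p koutpre kout S := {
    norm_inner_sub_gram_le i j := by rw [hGε, hG, hcip]; exact norm_sub_ite_lt_le hε0.le _
    sum_eq := hS
    cpre_zero i := by rw [hcpre0, hcip, hρ0]
    koutpre_zero := hkoutpre0
    reset_or_keep k := by
      by_cases hk : R k
      · exact .inl (by simpa only [hcip] using hresetT k hk)
      · obtain ⟨hc, hpk, hko⟩ := hresetF k hk
        refine .inr ⟨hc, hko, ?_⟩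
        rw [hc, hpk]
        exact not_lt.mp fun h => hk ((hR k).mpr (.inl h))
    greedy := hp
    residual_succ k := by
      simp only [ρ, d, hr, hcrec, Matrix.mulVec_add_single, sub_add_eq_sub_sub]
      rfl
    cpre_succ := hcprerec
    koutpre_succ := hkoutrec }
  have : Nontrivial (EuclideanSpace ℂ (Fin L)) := ⟨⟨WithLp.toLp 2 x, 0, by simpa using hx⟩⟩
  have hd (i : Fin P) : ‖d i‖ = 1 := (nrm_eq_norm _).symm.trans (hDnorm i)
  have hlam' : lammin = lambdaMin ℂ d := hlam.trans (iInf_iSup_cip_eq_lambdaMin D)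
  have hlam_pos : 0 < lammin := hlam' ▸ lambdaMin_pos (span_range_toLp_eq_top hspan)
  have hlam_le : lammin ≤ 1 := hlam' ▸ lambdaMin_le_one fun i => (hd i).le
  have hq0 : 0 < q := by rw [hq]; positivity
  have hq1 : q < 1 :=
    calc q = ϵ' / (1 + δ) ^ 2 * lammin := hq
      _ ≤ ϵ' * 1 := by gcongr; exact div_le_self hϵ'0.le (one_le_pow₀ (by linarith))
      _ < 1 := by linarith
  have hdecay (k : ℕ) : ‖ρ (k + 1)‖ ^ 2 ≤ (1 - q) * ‖ρ k‖ ^ 2 := by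
    rw [hq, hlam']; exact hrun.norm_sq_residual_succ_le hd hδ0 hϵ'0.le hϵ'.le k
  rw [nrm_eq_norm, nrm_eq_norm, ← hρ0]
  exact lt_mul_of_le_mul_succ_of_log_div_log_lt (u := fun m => ‖ρ m‖ ^ 2) (by linarith)
    (by linarith) hE0 (pow_pos (norm_pos_iff.mpr (by simpa [hρ0] using hx)) 2) hdecay hk

/-- Corollary 1 of the paper: if additionally `x ≠ 0` and `0 < E < 1`,
then for every natural number `k` with `k > log(E)/log(1 − q)`, the residual of
approximate coefficient-domain matching pursuit with resets satisfies
`‖r_k‖₂² < E·‖x‖₂²`; in particular, the algorithm with stopping condition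
`‖r_k‖₂² ≤ E·‖x‖₂²` terminates after finitely many selection steps.

Here `cpre k`, `ppre (k+1)`, `koutpre k` denote the pre-reset quantities `ĉ_k`, `p_{k+1}`,
`k°_k` at step `k`, `R k` is the reset criterion evaluated on them, and `chat k`,
`p (k+1)`, `kout k` are the corresponding effective (post-reset) quantities used in
the update. -/
theorem approx_cdmp_with_resets_terminates
    {L P : ℕ} (hL : 0 < L) (hP : 0 < P)
    (x : Fin L → ℂ) (hx : x ≠ 0) (D : Matrix (Fin L) (Fin P) ℂ)
    (hDnorm : ∀ i, nrm (fun l => D l i) = 1)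
    (hspan : Submodule.span ℂ (Set.range fun i => (fun l => D l i)) = ⊤)
    (lammin : ℝ)
    (hlam : lammin = ⨅ y : {y : Fin L → ℂ // nrm y = 1},
      ⨆ i : Fin P, ‖cip (y : Fin L → ℂ) (fun l => D l i)‖ ^ 2)
    (ε δ ϵ' q : ℝ)
    (hε0 : 0 < ε) (hε1 : ε < 1)
    (hδ0 : 0 < δ) (hδ : δ < 1 / 2)
    (hϵ'0 : 0 < ϵ') (hϵ' : ϵ' < 1 - 2 * δ)
    (hconstr : 2 * δ / (1 - (2 * δ + ϵ')) < Real.sqrt lammin)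
    (hq : q = ϵ' / (1 + δ) ^ 2 * lammin)
    (G Gε : Matrix (Fin P) (Fin P) ℂ)
    (hG : ∀ i j, G i j = cip (fun l => D l j) (fun l => D l i))
    (hGε : ∀ i j, Gε i j = if ε < ‖G i j‖ then G i j else 0)
    (c cpre chat : ℕ → Fin P → ℂ) (ppre p : ℕ → Fin P) (koutpre kout : ℕ → ℕ)
    (r : ℕ → Fin L → ℂ) (hr : ∀ k, r k = x - D.mulVec (c k))
    (S : ℕ → ℝ)
    (hS : ∀ k, S k = ∑ l ∈ Finset.Icc (koutpre k + 1) k, ‖chat (l - 1) (p l)‖)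
    (R : ℕ → Prop)
    (hR : ∀ k, R k ↔
      (‖cpre k (ppre (k + 1))‖ < ε / δ * S k ∨
        ‖cpre k (ppre (k + 1))‖ <
          2 * δ * (1 - q) ^ (((koutpre k : ℝ) - (k : ℝ)) / 2) / (1 - (2 * δ + ϵ')) *
            nrm (r (koutpre k))))
    (hc0 : c 0 = 0)
    (hcpre0 : ∀ i, cpre 0 i = cip x (fun l => D l i))
    (hkoutpre0 : koutpre 0 = 0)
    (hppre : ∀ k i, ‖cpre k i‖ ≤ ‖cpre k (ppre (k + 1))‖)
    (hresetT : ∀ k, R k → (chat k = fun i => cip (r k) (fun l => D l i)) ∧ kout k = k)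
    (hresetF : ∀ k, ¬ R k → chat k = cpre k ∧ p (k + 1) = ppre (k + 1) ∧ kout k = koutpre k)
    (hp : ∀ k i, ‖chat k i‖ ≤ ‖chat k (p (k + 1))‖)
    (hcrec : ∀ k, c (k + 1) = c k + Pi.single (p (k + 1)) (chat k (p (k + 1))))
    (hcprerec : ∀ k, cpre (k + 1) = fun i => chat k i - chat k (p (k + 1)) * Gε i (p (k + 1)))
    (hkoutrec : ∀ k, koutpre (k + 1) = kout k)
    (E : ℝ) (hE0 : 0 < E) (hE1 : E < 1) :
    ∀ k : ℕ, Real.log E / Real.log (1 - q) < (k : ℝ) →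
      nrm (r k) ^ 2 < E * nrm x ^ 2 :=
  approx_cdmp_with_resets_terminates_general x hx D hDnorm hspan lammin hlam ε δ ϵ' q hε0 hδ0 hϵ'0
    hϵ' hq G Gε hG hGε c cpre chat ppre p koutpre kout r hr S hS R hR hc0 hcpre0 hkoutpre0 hresetT
    hresetF hp hcrec hcprerec hkoutrec E hE0
end

section
/- For every k ≥ 0 and every index p, the truncation error of the Gram matrix applied to the current solution is controlled by the accumulated selected coefficient magnitudes: |((G − G_ε)·c_k)(p)| ≤ ε·Σ_k. -/
open scoped BigOperators
open ComplexConjugate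

/-!
Every entry of `G - G_ε` is either `0` or an entry of `G` of modulus at most `ε`, so each row
of `G - G_ε` pairs with `c_k` to at most `ε ‖c_k‖₁`. Each step of the pursuit adds a single
coefficient `ĉ_k(p_{k+1})` to `c_k`, so `‖c_k‖₁ ≤ Σ_k` by the triangle inequality.
-/

theorem norm_sub_ite_lt_norm_le {E : Type*} [SeminormedAddCommGroup E] {ε : ℝ} (hε : 0 ≤ ε)
    (g : E) : ‖g - if ε < ‖g‖ then g else 0‖ ≤ ε := by
  split_ifs with h
  · simpa using hε
  · simpa using not_lt.mp h

theorem Matrix.norm_mulVec_apply_le_of_norm_le {m n R : Type*} [Fintype n] [SeminormedRing R]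
    {A : Matrix m n R} {ε : ℝ} (hA : ∀ i j, ‖A i j‖ ≤ ε) (v : n → R) (i : m) :
    ‖A.mulVec v i‖ ≤ ε * ∑ j, ‖v j‖ := by
  rw [Finset.mul_sum]
  calc ‖A.mulVec v i‖ ≤ ∑ j, ‖A i j * v j‖ := norm_sum_le _ _
    _ ≤ ∑ j, ε * ‖v j‖ := by
      gcongr with j
      exact (norm_mul_le _ _).trans (by gcongr; exact hA i j)

theorem sum_norm_le_sum_range_of_add_single {ι E : Type*} [Fintype ι] [DecidableEq ι]
    [SeminormedAddCommGroup E] {c : ℕ → ι → E} {q : ℕ → ι} {a : ℕ → E} (hc0 : c 0 = 0)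
    (hc : ∀ k, c (k + 1) = c k + Pi.single (q k) (a k)) (k : ℕ) :
    ∑ j, ‖c k j‖ ≤ ∑ l ∈ Finset.range k, ‖a l‖ := by
  induction k with
  | zero => simp [hc0]
  | succ k ih =>
    have hsingle : ∑ j, ‖Pi.single (M := fun _ => E) (q k) (a k) j‖ = ‖a k‖ := by
      simp [Pi.single_apply, apply_ite]
    calc ∑ j, ‖c (k + 1) j‖ ≤ ∑ j, (‖c k j‖ + ‖Pi.single (M := fun _ => E) (q k) (a k) j‖) := by
          rw [hc k]
          exact Finset.sum_le_sum fun j _ => norm_add_le _ _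
      _ ≤ ∑ l ∈ Finset.range (k + 1), ‖a l‖ := by
          rw [Finset.sum_add_distrib, hsingle, Finset.sum_range_succ]
          gcongr

theorem approx_cdmp_truncation_error_bound_general
    {P : ℕ}
    (ε : ℝ) (hε : 0 < ε)
    (G Gε : Matrix (Fin P) (Fin P) ℂ)
    (hGε : ∀ i j, Gε i j = if ε < ‖G i j‖ then G i j else 0)
    (c chat : ℕ → Fin P → ℂ) (p : ℕ → Fin P)
    (hc0 : c 0 = 0)
    (hcrec : ∀ k, c (k + 1) = c k + Pi.single (p (k + 1)) (chat k (p (k + 1))))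
    (S : ℕ → ℝ)
    (hS : ∀ k, S k = ∑ l ∈ Finset.range k, ‖chat l (p (l + 1))‖) :
    ∀ k i, ‖(G - Gε).mulVec (c k) i‖ ≤ ε * S k := by
  have hentry : ∀ i j, ‖(G - Gε) i j‖ ≤ ε := fun i j => by
    rw [Matrix.sub_apply, hGε]
    exact norm_sub_ite_lt_norm_le hε.le _
  intro k i
  calc ‖(G - Gε).mulVec (c k) i‖ ≤ ε * ∑ j, ‖c k j‖ :=
        Matrix.norm_mulVec_apply_le_of_norm_le hentry _ _
    _ ≤ ε * S k := by
        rw [hS]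
        gcongr
        exact sum_norm_le_sum_range_of_add_single hc0 hcrec k

/-- in approximate coefficient-domain matching pursuit, the truncation
error of the Gram matrix applied to the current solution is controlled by the accumulated
selected coefficient magnitudes: `|((G − G_ε)·c_k)(p)| ≤ ε·Σ_k`. -/
theorem approx_cdmp_truncation_error_bound
    {L P : ℕ} (hL : 0 < L) (hP : 0 < P)
    (x : Fin L → ℂ) (D : Matrix (Fin L) (Fin P) ℂ)
    (hDnorm : ∀ q, nrm (fun l => D l q) = 1)
    (ε : ℝ) (hε : 0 < ε)
    (G Gε : Matrix (Fin P) (Fin P) ℂ)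
    (hG : ∀ i j, G i j = cip (fun l => D l j) (fun l => D l i))
    (hGε : ∀ i j, Gε i j = if ε < ‖G i j‖ then G i j else 0)
    (c chat : ℕ → Fin P → ℂ) (p : ℕ → Fin P)
    (hc0 : c 0 = 0)
    (hchat0 : ∀ i, chat 0 i = cip x (fun l => D l i))
    (hp : ∀ k i, ‖chat k i‖ ≤ ‖chat k (p (k + 1))‖)
    (hchatrec : ∀ k, chat (k + 1) = fun i => chat k i - chat k (p (k + 1)) * Gε i (p (k + 1)))
    (hcrec : ∀ k, c (k + 1) = c k + Pi.single (p (k + 1)) (chat k (p (k + 1))))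
    (r : ℕ → Fin L → ℂ) (hr : ∀ k, r k = x - D.mulVec (c k))
    (S : ℕ → ℝ)
    (hS : ∀ k, S k = ∑ l ∈ Finset.range k, ‖chat l (p (l + 1))‖) :
    ∀ k i, ‖(G - Gε).mulVec (c k) i‖ ≤ ε * S k :=
  approx_cdmp_truncation_error_bound_general ε hε G Gε hGε c chat p hc0 hcrec S hS
end

section
/- Immediately after a reset the second reset condition cannot hold: if r ∈ ℂ^L, r ≠ 0, ĉ = D*r, and p* is an index with |ĉ(q)| ≤ |ĉ(p*)| for all q, then |ĉ(p*)| > (2δ/(1−(2δ+ϵ')))·‖r‖₂. -/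
open scoped BigOperators
open ComplexConjugate

/-!
Normalising `r` gives a unit vector `y = r / ‖r‖` whose correlations with the atoms are
`ĉ(q) / ‖r‖`. By definition of `λ_min` as an infimum over unit vectors,
`λ_min ≤ max_q |ĉ(q)|² / ‖r‖² = |ĉ(p*)|² / ‖r‖²`, i.e. `√λ_min · ‖r‖ ≤ |ĉ(p*)|`,
and the constraint `2δ/(1−(2δ+ϵ')) < √λ_min` turns this into the strict inequality.
-/

section

variable {L : ℕ}

lemma nrm_eq_norm_toLp (u : Fin L → ℂ) :
    nrm u = ‖(WithLp.toLp 2 u : EuclideanSpace ℂ (Fin L))‖ := by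
  rw [EuclideanSpace.norm_eq]
  rfl

lemma nrm_pos {r : Fin L → ℂ} (hr : r ≠ 0) : 0 < nrm r := by
  rw [nrm_eq_norm_toLp, norm_pos_iff]
  exact fun h => hr (congrArg WithLp.ofLp h)

lemma nrm_inv_smul_self {r : Fin L → ℂ} (hr : r ≠ 0) :
    nrm (((nrm r)⁻¹ : ℂ) • r) = 1 := by
  rw [nrm_eq_norm_toLp, WithLp.toLp_smul, norm_smul, ← nrm_eq_norm_toLp, norm_inv,
    Complex.norm_real, Real.norm_of_nonneg (nrm_pos hr).le, inv_mul_cancel₀ (nrm_pos hr).ne']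

lemma cip_smul_left (a : ℂ) (u v : Fin L → ℂ) : cip (a • u) v = a * cip u v := by
  simp only [cip, Pi.smul_apply, smul_eq_mul, Finset.mul_sum, mul_assoc]

lemma iInf_iSup_norm_cip_sq_le {ι : Type*} (d : ι → Fin L → ℂ) {r : Fin L → ℂ}
    (hr : r ≠ 0) {M : ℝ} (hM : ∀ q, ‖cip r (d q)‖ ≤ M) :
    (⨅ y : {y : Fin L → ℂ // nrm y = 1}, ⨆ q, ‖cip (y : Fin L → ℂ) (d q)‖ ^ 2)
      ≤ (M / nrm r) ^ 2 := by
  have hbdd : BddBelow (Set.range fun y : {y : Fin L → ℂ // nrm y = 1} =>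
      ⨆ q, ‖cip (y : Fin L → ℂ) (d q)‖ ^ 2) :=
    ⟨0, by rintro _ ⟨y, rfl⟩; exact Real.iSup_nonneg fun q => by positivity⟩
  refine (ciInf_le hbdd ⟨_, nrm_inv_smul_self hr⟩).trans
    (Real.iSup_le (fun q => ?_) (sq_nonneg _))
  have hr0 : 0 ≤ nrm r := (nrm_pos hr).le
  rw [cip_smul_left, norm_mul, norm_inv, Complex.norm_real, Real.norm_of_nonneg hr0,
    inv_mul_eq_div]
  exact pow_le_pow_left₀ (div_nonneg (norm_nonneg _) hr0)
    (div_le_div_of_nonneg_right (hM q) hr0) 2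

end

theorem reset_condition_cannot_hold_after_reset_general
    {L P : ℕ}
    (D : Matrix (Fin L) (Fin P) ℂ)
    (lammin : ℝ)
    (hlam : lammin = ⨅ y : {y : Fin L → ℂ // nrm y = 1},
      ⨆ q : Fin P, ‖cip (y : Fin L → ℂ) (fun l => D l q)‖ ^ 2)
    (δ ϵ' : ℝ)
    (hconstr : 2 * δ / (1 - (2 * δ + ϵ')) < Real.sqrt lammin)
    (r : Fin L → ℂ) (hr : r ≠ 0)
    (chat : Fin P → ℂ) (hchat : ∀ i, chat i = cip r (fun l => D l i))
    (pstar : Fin P) (hpstar : ∀ i, ‖chat i‖ ≤ ‖chat pstar‖) :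
    2 * δ / (1 - (2 * δ + ϵ')) * nrm r < ‖chat pstar‖ := by
  have hlam_le : lammin ≤ (‖chat pstar‖ / nrm r) ^ 2 :=
    hlam ▸ iInf_iSup_norm_cip_sq_le _ hr fun q => hchat q ▸ hpstar q
  have hsqrt : Real.sqrt lammin ≤ ‖chat pstar‖ / nrm r :=
    Real.sqrt_le_iff.mpr ⟨div_nonneg (norm_nonneg _) (nrm_pos hr).le, hlam_le⟩
  rw [← lt_div_iff₀ (nrm_pos hr)]
  exact hconstr.trans_le hsqrt

/-- immediately after a reset, the second reset condition cannot hold: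
if `r ≠ 0`, `ĉ = D*r`, and `p*` maximizes `|ĉ(q)|`, then
`|ĉ(p*)| > (2δ/(1−(2δ+ϵ')))·‖r‖₂`. -/
theorem reset_condition_cannot_hold_after_reset
    {L P : ℕ} (hL : 0 < L) (hP : 0 < P)
    (D : Matrix (Fin L) (Fin P) ℂ)
    (hDnorm : ∀ q, nrm (fun l => D l q) = 1)
    (hspan : Submodule.span ℂ (Set.range fun q => (fun l => D l q)) = ⊤)
    (lammin : ℝ)
    (hlam : lammin = ⨅ y : {y : Fin L → ℂ // nrm y = 1},
      ⨆ q : Fin P, ‖cip (y : Fin L → ℂ) (fun l => D l q)‖ ^ 2)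
    (δ ϵ' : ℝ) (hδ0 : 0 < δ) (hδ : δ < 1 / 2)
    (hϵ'0 : 0 < ϵ') (hϵ' : ϵ' < 1 - 2 * δ)
    (hconstr : 2 * δ / (1 - (2 * δ + ϵ')) < Real.sqrt lammin)
    (r : Fin L → ℂ) (hr : r ≠ 0)
    (chat : Fin P → ℂ) (hchat : ∀ i, chat i = cip r (fun l => D l i))
    (pstar : Fin P) (hpstar : ∀ i, ‖chat i‖ ≤ ‖chat pstar‖) :
    2 * δ / (1 - (2 * δ + ϵ')) * nrm r < ‖chat pstar‖ :=
  reset_condition_cannot_hold_after_reset_general D lammin hlam δ ϵ' hconstr r hr chat hchat pstar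
    hpstar
end
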